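/- Let T be the DL-Lite_R TBox {Vertex ⊑ ∃hasColour, hasColour ⊑ Assign} and q(w) the rooted CQ ∃x,y,z,k,l. Edge(x,y) ∧ hasColour(x,z) ∧ hasColour(y,z) ∧ Assign(x,w) ∧ Assign(y,w) ∧ Reachable(x,k) ∧ Assign(k,l). For any finite undirected connected graph G = (V,E) without self-loops, with the vertices of V, a fresh vertex a, and fresh colours r,g,b all pairwise distinct individuals, let A_G be the bag ABox containing (all with multiplicity 1): Vertex(u) for each u ∈ V; Edge(u,v) and Edge(v,u) for each {u,v} ∈ E; Assign(u,r), Assign(u,g), Assign(u,b) for each u ∈ V; Vertex(a), Edge(a,a), hasColour(a,r), Assign(a,r); and Reachable(a,a), Reachable(a,u), Reachable(u,a) for every u ∈ V, and Reachable(u,v), Reachable(v,u) for all distinct u,v ∈ V. Then G is not 3-colourable if and only if the bag certain answer q^{⟨T,A_G⟩}(r) is at least 3·|V| + 2. -/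

import Mathlib

/-!
Common formalization of the bag semantics of DL-Lite ontologies
(Nikolaou et al., "The Bag Semantics of Ontology-Based Data Access").
-/

open scoped Classical

noncomputable section

/-- Individuals (constants). -/
abbrev Ind : Type := ℕ
/-- Variables. -/
abbrev Var : Type := ℕ
/-- Atomic concepts (unary predicates). -/
abbrev AtomicConcept : Type := ℕ
/-- Atomic roles (binary predicates). -/
abbrev AtomicRole : Type := ℕ

/-- A role is an atomic role or its inverse. -/
inductive Role where
  | atomic : AtomicRole → Role
  | inv : AtomicRole → Role
  deriving DecidableEq

/-- A concept is an atomic concept or `∃R` for a role `R`. -/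
inductive DLConcept where
  | atomic : AtomicConcept → DLConcept
  | ex : Role → DLConcept
  deriving DecidableEq

/-- TBox axioms: inclusions and disjointness axioms between concepts or roles. -/
inductive TBoxAxiom where
  | cIncl : DLConcept → DLConcept → TBoxAxiom
  | rIncl : Role → Role → TBoxAxiom
  | cDisj : DLConcept → DLConcept → TBoxAxiom
  | rDisj : Role → Role → TBoxAxiom
  deriving DecidableEq

/-- A DL-Lite_R TBox: a finite set of TBox axioms. -/
abbrev TBox : Type := Finset TBoxAxiom

/-- A DL-Lite_core TBox: only concept inclusions and concept disjointness axioms. -/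
def TBox.IsCore (T : TBox) : Prop :=
  ∀ ax ∈ T, (∃ C D, ax = TBoxAxiom.cIncl C D) ∨ (∃ C D, ax = TBoxAxiom.cDisj C D)

/-- ABox assertions. -/
inductive Assertion where
  | conceptA : AtomicConcept → Ind → Assertion
  | roleA : AtomicRole → Ind → Ind → Assertion
  deriving DecidableEq

/-- A bag ABox: a finite bag of assertions (represented as a multiset). -/
abbrev BagABox : Type := Multiset Assertion

/-- Multiplicity of an assertion in a bag ABox, as an extended natural. -/
def BagABox.mult (A : BagABox) (s : Assertion) : ℕ∞ := (A.count s : ℕ∞)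

/-- Sum of an arbitrary family of extended naturals. -/
def bagSum {α : Type*} (f : α → ℕ∞) : ℕ∞ := ⨆ s : Finset α, ∑ x ∈ s, f x

/-- A bag interpretation. -/
structure BagInterp : Type 1 where
  Δ : Type
  dne : Nonempty Δ
  indMap : Ind → Δ
  indInj : Function.Injective indMap
  cI : AtomicConcept → Δ → ℕ∞
  rI : AtomicRole → Δ → Δ → ℕ∞

/-- Extension of the interpretation function to roles. -/
def BagInterp.roleMult (I : BagInterp) : Role → I.Δ → I.Δ → ℕ∞
  | Role.atomic P => fun u v => I.rI P u v
  | Role.inv P => fun u v => I.rI P v u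

/-- Extension of the interpretation function to concepts. -/
def BagInterp.conceptMult (I : BagInterp) : DLConcept → I.Δ → ℕ∞
  | DLConcept.atomic A => fun u => I.cI A u
  | DLConcept.ex R => fun u => bagSum (fun v => I.roleMult R u v)

/-- Multiplicity of an assertion in a bag interpretation. -/
def BagInterp.assertMult (I : BagInterp) : Assertion → ℕ∞
  | Assertion.conceptA A a => I.cI A (I.indMap a)
  | Assertion.roleA P a b => I.rI P (I.indMap a) (I.indMap b)

/-- Satisfaction of a TBox axiom by a bag interpretation. -/
def BagInterp.SatisfiesAx (I : BagInterp) : TBoxAxiom → Prop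
  | TBoxAxiom.cIncl C D => ∀ u, I.conceptMult C u ≤ I.conceptMult D u
  | TBoxAxiom.rIncl R S => ∀ u v, I.roleMult R u v ≤ I.roleMult S u v
  | TBoxAxiom.cDisj C D => ∀ u, min (I.conceptMult C u) (I.conceptMult D u) = 0
  | TBoxAxiom.rDisj R S => ∀ u v, min (I.roleMult R u v) (I.roleMult S u v) = 0

/-- A DL-Lite^bag ontology. -/
structure Ontology : Type where
  tbox : TBox
  abox : BagABox

/-- `I` is a bag model of the ontology `K`. -/
def BagInterp.IsModel (I : BagInterp) (K : Ontology) : Prop :=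
  (∀ ax ∈ K.tbox, I.SatisfiesAx ax) ∧
  ∀ s : Assertion, BagABox.mult K.abox s ≤ I.assertMult s

/-- Satisfiability of an ontology under bag semantics. -/
def Ontology.Satisfiable (K : Ontology) : Prop := ∃ I : BagInterp, I.IsModel K

/- ## Conjunctive queries -/

/-- Terms: variables or individuals. -/
inductive Term where
  | var : Var → Term
  | ind : Ind → Term
  deriving DecidableEq

def Term.varsOf : Term → List Var
  | Term.var v => [v]
  | Term.ind _ => []

def Term.indsOf : Term → List Ind
  | Term.var _ => []
  | Term.ind a => [a]

/-- Query atoms: concept atoms, role atoms, and equalities. -/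
inductive QAtom where
  | conceptAt : AtomicConcept → Term → QAtom
  | roleAt : AtomicRole → Term → Term → QAtom
  | eqAt : Var → Term → QAtom
  deriving DecidableEq

def QAtom.terms : QAtom → List Term
  | QAtom.conceptAt _ t => [t]
  | QAtom.roleAt _ t₁ t₂ => [t₁, t₂]
  | QAtom.eqAt z t => [Term.var z, t]

def QAtom.vars : QAtom → List Var
  | QAtom.conceptAt _ t => t.varsOf
  | QAtom.roleAt _ t₁ t₂ => t₁.varsOf ++ t₂.varsOf
  | QAtom.eqAt z t => z :: t.varsOf

/-- A conjunctive query `q(x) = ∃y. φ(x,y)`: a tuple of answer variables,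
a tuple of existential variables, and a conjunction (list, i.e. allowing
repetitions) of atoms. -/
structure CQ : Type where
  answerVars : List Var
  existVars : List Var
  atoms : List QAtom

def CQ.vars (q : CQ) : List Var := q.answerVars ++ q.existVars

/-- Value of a term under a valuation of the variables. -/
def termVal (I : BagInterp) (f : Var → I.Δ) : Term → I.Δ
  | Term.var v => f v
  | Term.ind a => I.indMap a

/-- Multiplicity contributed by an atom under a valuation: for predicate atoms the
multiplicity of the image tuple, for equalities the indicator of satisfaction. -/
def QAtom.mult (I : BagInterp) (f : Var → I.Δ) : QAtom → ℕ∞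
  | QAtom.conceptAt A t => I.cI A (termVal I f t)
  | QAtom.roleAt P t₁ t₂ => I.rI P (termVal I f t₁) (termVal I f t₂)
  | QAtom.eqAt z t => if f z = termVal I f t then 1 else 0

/-- The bag answers `q^I(ā)`: the sum, over all valuations of the variables of `q`
mapping the answer variables to `ā` (valuations are normalized to a fixed junk
value outside the variables of `q`), of the product of the multiplicities of the
atom occurrences of `q`. -/
def CQ.bagAnswer (q : CQ) (I : BagInterp) (a : List Ind) : ℕ∞ :=
  bagSum (fun f : {f : Var → I.Δ //
      (∀ v, v ∉ q.vars → f v = I.indMap 0) ∧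
      q.answerVars.map f = a.map I.indMap} =>
    (q.atoms.map (QAtom.mult I f.1)).prod)

/-- Bag certain answers: pointwise minimum over all bag models. -/
def bagCertain (K : Ontology) (q : CQ) (a : List Ind) : ℕ∞ :=
  ⨅ (I : BagInterp) (_ : I.IsModel K), q.bagAnswer I a

/-- Base relation of the equivalence relation generated by the equality atoms. -/
def CQ.eqBase (q : CQ) : Term → Term → Prop := fun t₁ t₂ =>
  ∃ z t, QAtom.eqAt z t ∈ q.atoms ∧ t₁ = Term.var z ∧ t₂ = t

/-- Equivalence of terms generated by the equality atoms of `q`. -/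
def CQ.eqRel (q : CQ) : Term → Term → Prop := Relation.EqvGen q.eqBase

/-- Safety: the class of every variable contains a term occurring in a
non-equality atom. -/
def CQ.Safe (q : CQ) : Prop :=
  ∀ v ∈ q.vars, ∃ t : Term, ∃ atm ∈ q.atoms,
    (∀ z s, atm ≠ QAtom.eqAt z s) ∧ t ∈ QAtom.terms atm ∧ q.eqRel (Term.var v) t

/-- Well-formedness of CQs: repetition-free disjoint tuples of variables, all
variables of the atoms among the declared variables, and safety. -/
def CQ.WellFormed (q : CQ) : Prop :=
  q.answerVars.Nodup ∧ q.existVars.Nodup ∧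
  (∀ v ∈ q.answerVars, v ∉ q.existVars) ∧
  (∀ atm ∈ q.atoms, ∀ v ∈ QAtom.vars atm, v ∈ q.vars) ∧
  q.Safe

def CQ.mentionsTerm (q : CQ) (t : Term) : Prop := ∃ atm ∈ q.atoms, t ∈ QAtom.terms atm

/-- Adjacency in the Gaifman graph of `q` (on terms; equality atoms merge the
classes of their two terms, which for connectivity purposes is the same as
making them adjacent). -/
def CQ.gaifmanAdj (q : CQ) : Term → Term → Prop := fun t₁ t₂ =>
  ∃ atm ∈ q.atoms, t₁ ∈ QAtom.terms atm ∧ t₂ ∈ QAtom.terms atm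

/-- A CQ is rooted if every connected component of its Gaifman graph contains
an answer variable or an individual. -/
def CQ.Rooted (q : CQ) : Prop :=
  ∀ t : Term, q.mentionsTerm t →
    ∃ t' : Term, Relation.ReflTransGen q.gaifmanAdj t t' ∧
      ((∃ v ∈ q.answerVars, t' = Term.var v) ∨ ∃ a : Ind, t' = Term.ind a)

/- ## Set semantics -/

/-- A classical (set) interpretation. -/
structure SetInterp : Type 1 where
  Δ : Type
  dne : Nonempty Δ
  indMap : Ind → Δ
  indInj : Function.Injective indMap
  cI : AtomicConcept → Set Δ
  rI : AtomicRole → Set (Δ × Δ)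

def SetInterp.roleSet (I : SetInterp) : Role → Set (I.Δ × I.Δ)
  | Role.atomic P => I.rI P
  | Role.inv P => {p | (p.2, p.1) ∈ I.rI P}

def SetInterp.conceptSet (I : SetInterp) : DLConcept → Set I.Δ
  | DLConcept.atomic A => I.cI A
  | DLConcept.ex R => {u | ∃ v, (u, v) ∈ I.roleSet R}

def SetInterp.SatisfiesAx (I : SetInterp) : TBoxAxiom → Prop
  | TBoxAxiom.cIncl C D => I.conceptSet C ⊆ I.conceptSet D
  | TBoxAxiom.rIncl R S => I.roleSet R ⊆ I.roleSet S
  | TBoxAxiom.cDisj C D => I.conceptSet C ∩ I.conceptSet D = ∅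
  | TBoxAxiom.rDisj R S => I.roleSet R ∩ I.roleSet S = ∅

def SetInterp.SatisfiesAssertion (I : SetInterp) : Assertion → Prop
  | Assertion.conceptA A a => I.indMap a ∈ I.cI A
  | Assertion.roleA P a b => (I.indMap a, I.indMap b) ∈ I.rI P

/-- `I` is a (set) model of the TBox `T` and the set ABox `A`. -/
def SetInterp.IsModelOf (I : SetInterp) (T : TBox) (A : Finset Assertion) : Prop :=
  (∀ ax ∈ T, I.SatisfiesAx ax) ∧ ∀ s ∈ A, I.SatisfiesAssertion s

def setTermVal (I : SetInterp) (f : Var → I.Δ) : Term → I.Δ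
  | Term.var v => f v
  | Term.ind a => I.indMap a

def SetInterp.SatAtom (I : SetInterp) (f : Var → I.Δ) : QAtom → Prop
  | QAtom.conceptAt A t => setTermVal I f t ∈ I.cI A
  | QAtom.roleAt P t₁ t₂ => (setTermVal I f t₁, setTermVal I f t₂) ∈ I.rI P
  | QAtom.eqAt z t => f z = setTermVal I f t

/-- `q(ā)` holds in the set interpretation `I`. -/
def SetInterp.SatCQ (I : SetInterp) (q : CQ) (a : List Ind) : Prop :=
  ∃ f : Var → I.Δ, q.answerVars.map f = a.map I.indMap ∧ ∀ atm ∈ q.atoms, I.SatAtom f atm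

/-- Entailment of a concept inclusion from a TBox (standard set semantics). -/
def TBox.EntailsCI (T : TBox) (C D : DLConcept) : Prop :=
  ∀ I : SetInterp, (∀ ax ∈ T, I.SatisfiesAx ax) → I.conceptSet C ⊆ I.conceptSet D

/- ## The canonical bag model -/

/-- Domain elements of the canonical model: individuals and anonymous elements
`w^j_{u,R}`. -/
inductive CanElem where
  | ind : Ind → CanElem
  | anon : CanElem → Role → ℕ → CanElem
  deriving DecidableEq

def CanElem.isAnon : CanElem → Prop
  | CanElem.ind _ => False
  | CanElem.anon _ _ _ => True

/-- A stage of the canonical-model construction: a set of active elements and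
bag interpretations of the predicates. -/
structure PreInterp : Type where
  active : Set CanElem
  c : AtomicConcept → CanElem → ℕ∞
  r : AtomicRole → CanElem → CanElem → ℕ∞

def PreInterp.toInterp (P : PreInterp) : BagInterp where
  Δ := CanElem
  dne := ⟨CanElem.ind 0⟩
  indMap := CanElem.ind
  indInj := fun a b h => by cases h; rfl
  cI := P.c
  rI := P.r

/-- Concept closure: `ccl(u,I,T)(C)` is the supremum of `C₀^I(u)` over all
concepts `C₀` with `T ⊨ C₀ ⊑ C`. -/
def cclI (T : TBox) (I : BagInterp) (C : DLConcept) (u : I.Δ) : ℕ∞ :=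
  ⨆ C₀ : {C₀ : DLConcept // TBox.EntailsCI T C₀ C}, I.conceptMult C₀.1 u

def PreInterp.ccl (P : PreInterp) (T : TBox) (u : CanElem) (C : DLConcept) : ℕ∞ :=
  cclI T P.toInterp C u

/-- `δ = ccl(u,C_{i-1},T)(∃R) − (∃R)^{C_{i-1}}(u)` (truncated subtraction). -/
def PreInterp.delta (P : PreInterp) (T : TBox) (u : CanElem) (R : Role) : ℕ∞ :=
  P.ccl T u (DLConcept.ex R) - P.toInterp.conceptMult (DLConcept.ex R) u

/-- The anonymous elements freshly added when stepping from `P`. -/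
def PreInterp.NewAnon (P : PreInterp) (T : TBox) (w : CanElem) : Prop :=
  ∃ u R j, w = CanElem.anon u R j ∧ u ∈ P.active ∧ (j : ℕ∞) < P.delta T u R

/-- One step of the canonical-model construction. -/
def PreInterp.step (P : PreInterp) (T : TBox) : PreInterp where
  active := P.active ∪ {w | P.NewAnon T w}
  c := fun A u => if u ∈ P.active then P.ccl T u (DLConcept.atomic A) else 0
  r := fun P₀ u v =>
    if u ∈ P.active ∧ v ∈ P.active then P.r P₀ u v
    else if ∃ j, v = CanElem.anon u (Role.atomic P₀) j ∧ P.NewAnon T v then 1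
    else if ∃ j, u = CanElem.anon v (Role.inv P₀) j ∧ P.NewAnon T u then 1
    else 0

/-- The stages `C_i(K)` of the canonical bag model. -/
def canStage (K : Ontology) : ℕ → PreInterp
  | 0 =>
    { active := Set.range CanElem.ind
      c := fun A u =>
        match u with
        | CanElem.ind a => BagABox.mult K.abox (Assertion.conceptA A a)
        | _ => 0
      r := fun P u v =>
        match u, v with
        | CanElem.ind a, CanElem.ind b => BagABox.mult K.abox (Assertion.roleA P a b)
        | _, _ => 0 }
  | (i + 1) => (canStage K i).step K.tbox

/-- The canonical bag model `C(K) = ⋃_{i ≥ 0} C_i(K)` (pointwise maximum). -/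
def canInterp (K : Ontology) : BagInterp where
  Δ := CanElem
  dne := ⟨CanElem.ind 0⟩
  indMap := CanElem.ind
  indInj := fun a b h => by cases h; rfl
  cI := fun A u => ⨆ i, (canStage K i).c A u
  rI := fun P u v => ⨆ i, (canStage K i).r P u v

/-- The canonical bag model `C(⟨∅,A⟩)` of the ontology with empty TBox:
individuals as domain, every predicate interpreted by its ABox bag. -/
def emptyCanInterp (A : BagABox) : BagInterp where
  Δ := Ind
  dne := ⟨0⟩
  indMap := id
  indInj := fun _ _ h => h
  cI := fun C a => BagABox.mult A (Assertion.conceptA C a)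
  rI := fun P a b => BagABox.mult A (Assertion.roleA P a b)

/-- `[q,z]^{C(K)}`: bag answers over the canonical model computed only over
valuations sending the variables of `z` to anonymous elements and the remaining
existential variables to individuals. -/
def CQ.restrictedAnswer (q : CQ) (K : Ontology) (z : Finset Var) (a : List Ind) : ℕ∞ :=
  bagSum (fun f : {f : Var → CanElem //
      (∀ v, v ∉ q.vars → f v = CanElem.ind 0) ∧
      q.answerVars.map f = a.map CanElem.ind ∧
      ∀ v ∈ q.existVars, (v ∈ z → CanElem.isAnon (f v)) ∧ (v ∉ z → ∃ b : Ind, f v = CanElem.ind b)} =>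
    (q.atoms.map (QAtom.mult (canInterp K) f.1)).prod)

/- ## Ma-connected subsets, realisability, and the per-`z` rewritten query -/

/-- `t` is a variable belonging to `z`. -/
def Term.IsZVar (t : Term) (z : Finset Var) : Prop := ∃ v ∈ z, t = Term.var v

/-- Adjacency in the Gaifman graph restricted to nodes that are variables of `z`. -/
def CQ.zAdj (q : CQ) (z : Finset Var) : Term → Term → Prop := fun t₁ t₂ =>
  q.gaifmanAdj t₁ t₂ ∧ t₁.IsZVar z ∧ t₂.IsZVar z

/-- `z'` is maximally connected in the anonymous part (ma-connected) within `z`. -/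
def CQ.MAConnected (q : CQ) (z z' : Finset Var) : Prop :=
  z' ⊆ z ∧
  (∀ v ∈ z', ∀ w ∈ z, Relation.ReflTransGen (q.zAdj z) (Term.var v) (Term.var w) → w ∈ z') ∧
  (∀ v ∈ z', ∀ w ∈ z', Relation.ReflTransGen (q.zAdj z) (Term.var v) (Term.var w))

/-- `φ_{z'}`: the subconjunction of all atoms of `q` mentioning a variable of `z'`. -/
def CQ.subAtoms (q : CQ) (z' : Finset Var) : List QAtom :=
  q.atoms.filter (fun atm => decide (∃ v ∈ z', v ∈ QAtom.vars atm))

def termsOfList (l : List QAtom) : List Term :=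
  l.foldr (fun atm acc => QAtom.terms atm ++ acc) []

/-- `t_{z'}`: all terms occurring in `φ_{z'}` that are not variables of `z`. -/
def CQ.tTerms (q : CQ) (z z' : Finset Var) : List Term :=
  (termsOfList (q.subAtoms z')).filter (fun t => decide (¬ t.IsZVar z))

/-- `atm` is a legitimate choice of `α_{z'}`: an atom of `φ_{z'}` of the form
`P(t,z)` or `P(z,t)` with `z ∈ z'` and the term `t` not a variable of `z`. -/
def IsAlphaFor (q : CQ) (z z' : Finset Var) (atm : QAtom) : Prop :=
  atm ∈ q.subAtoms z' ∧
  ((∃ P t v, v ∈ z' ∧ ¬ Term.IsZVar t z ∧ atm = QAtom.roleAt P t (Term.var v)) ∨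
   (∃ P t v, v ∈ z' ∧ ¬ Term.IsZVar t z ∧ atm = QAtom.roleAt P (Term.var v) t))

def CQ.inds (q : CQ) : List Ind :=
  (termsOfList q.atoms).foldr (fun t acc => t.indsOf ++ acc) []

def CQ.maxInd (q : CQ) : Ind := q.inds.foldr max 0

/-- The individual `a` of `q^a_{z'}`: the individual among `t_{z'}` if one
exists, and a fresh individual otherwise. -/
def freshA (q : CQ) (z z' : Finset Var) : Ind :=
  if h : ∃ c : Ind, Term.ind c ∈ q.tTerms z z' then h.choose else q.maxInd + 1

/-- A fresh individual `b` (distinct from `freshA`). -/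
def freshB (q : CQ) : Ind := q.maxInd + 2

/-- The one-assertion bag ABox `A'` used to test realisability: `{P(a,b)}` if
`α_{z'} = P(t,z)` and `{P(b,a)}` if `α_{z'} = P(z,t)`. -/
def alphaABox (z' : Finset Var) (atm : QAtom) (a b : Ind) : BagABox :=
  match atm with
  | QAtom.roleAt P _ t₂ =>
      if Term.IsZVar t₂ z' then {Assertion.roleA P a b} else {Assertion.roleA P b a}
  | _ => 0

def subVars (q : CQ) (z' : Finset Var) : List Var :=
  (q.subAtoms z').foldr (fun atm acc => QAtom.vars atm ++ acc) []

/-- The bag answer `(q^a_{z'})^{C(⟨T,A'⟩)}(⟨⟩)` of the Boolean query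
`q^a_{z'}() = ∃x'.∃z'. φ_{z'} ∧ ⋀_{t ∈ t_{z'}}(t = a) ∧ ⋀_{z ∈ z'}(z ≠ a)`
over the canonical model of `⟨T,A'⟩`. -/
def realQAnswer (T : TBox) (q : CQ) (z z' : Finset Var) (atm : QAtom) : ℕ∞ :=
  bagSum (fun f : {f : Var → CanElem //
      (∀ v, v ∉ subVars q z' → f v = CanElem.ind 0) ∧
      (∀ t ∈ q.tTerms z z',
        termVal (canInterp ⟨T, alphaABox z' atm (freshA q z z') (freshB q)⟩) f t
          = CanElem.ind (freshA q z z')) ∧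
      ∀ v ∈ z', f v ≠ CanElem.ind (freshA q z z')} =>
    ((q.subAtoms z').map
      (QAtom.mult (canInterp ⟨T, alphaABox z' atm (freshA q z z') (freshB q)⟩) f.1)).prod)

/-- Equality-consistency of `z`: no equality atom `z = t` with `z ∈ z` and `t ∉ z`. -/
def EqConsistent (q : CQ) (z : Finset Var) : Prop :=
  ∀ v t, QAtom.eqAt v t ∈ q.atoms → v ∈ z → Term.IsZVar t z

/-- The ma-connected subset `z'` is realisable by `T` (w.r.t. the chosen `α_{z'}`). -/
def RealisableMA (T : TBox) (q : CQ) (z z' : Finset Var) (atm : QAtom) : Prop :=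
  1 ≤ realQAnswer T q z z' atm

/-- `z` is realisable by `T`: equality-consistent and every nonempty
ma-connected subset of `z` is realisable. -/
def RealisableZ (T : TBox) (q : CQ) (z : Finset Var) (alpha : Finset Var → QAtom) : Prop :=
  EqConsistent q z ∧
  ∀ z' : Finset Var, q.MAConnected z z' → z'.Nonempty → RealisableMA T q z z' (alpha z')

/-- The nonempty ma-connected subsets of `z`. -/
def maSets (q : CQ) (z : Finset Var) : Finset (Finset Var) :=
  z.powerset.filter (fun z' => q.MAConnected z z' ∧ z'.Nonempty)

def tTermVars (q : CQ) (z z' : Finset Var) : List Var :=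
  (q.tTerms z z').foldr (fun t acc => Term.varsOf t ++ acc) []

/-- The equalities identifying all the terms of `t_{z'}`. -/
def eqAtomsFor (q : CQ) (z z' : Finset Var) : List QAtom :=
  (tTermVars q z z').foldr
    (fun v acc => ((q.tTerms z z').map (fun t => QAtom.eqAt v t)) ++ acc) []

/-- Atoms of `q_z`: the atoms of `q` not mentioning a variable of `z`, plus,
for each nonempty ma-connected `z' ⊆ z`, the atom `α_{z'}` together with the
equalities identifying the terms of `t_{z'}`. -/
def qzAtoms (q : CQ) (z : Finset Var) (alpha : Finset Var → QAtom) : List QAtom :=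
  q.atoms.filter (fun atm => decide (¬ ∃ v ∈ z, v ∈ QAtom.vars atm))
    ++ (maSets q z).toList.foldr (fun z' acc => alpha z' :: (eqAtomsFor q z z' ++ acc)) []

/-- The CQ `q_z(x) = ∃y'. φ_z(x,y')`. -/
def qz (q : CQ) (z : Finset Var) (alpha : Finset Var → QAtom) : CQ where
  answerVars := q.answerVars
  existVars := q.existVars.filter (fun v => decide (∃ atm ∈ qzAtoms q z alpha, v ∈ QAtom.vars atm))
  atoms := qzAtoms q z alpha

/- ## The BALG rewriting `q̄` -/

/-- Value of an atom of `q_z` after the rewriting step 3 (`chasing back'' with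
the TBox): concept atoms `A(t)` become `⋁_{T ⊨ C ⊑ A} ζ_C(t)`, role atoms with a
`z`-variable become the corresponding truncated difference, and the remaining
atoms are evaluated as before. -/
def rewAtomVal (T : TBox) (I : BagInterp) (z : Finset Var) (f : Var → I.Δ) : QAtom → ℕ∞
  | QAtom.conceptAt A t => cclI T I (DLConcept.atomic A) (termVal I f t)
  | QAtom.roleAt P t₁ t₂ =>
      if Term.IsZVar t₂ z then
        cclI T I (DLConcept.ex (Role.atomic P)) (termVal I f t₁)
          - I.conceptMult (DLConcept.ex (Role.atomic P)) (termVal I f t₁)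
      else if Term.IsZVar t₁ z then
        cclI T I (DLConcept.ex (Role.inv P)) (termVal I f t₂)
          - I.conceptMult (DLConcept.ex (Role.inv P)) (termVal I f t₂)
      else I.rI P (termVal I f t₁) (termVal I f t₂)
  | QAtom.eqAt v t => if f v = termVal I f t then 1 else 0

/-- Bag answers of the BALG query `q̄_z`, obtained from `q_z` by projecting only
the variables of `y' ∖ z` and replacing atoms as in `rewAtomVal`. -/
def rewAnswer (T : TBox) (qq : CQ) (z : Finset Var) (I : BagInterp) (a : List Ind) : ℕ∞ :=
  bagSum (fun f : {f : Var → I.Δ //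
      (∀ v, v ∉ qq.answerVars ++ qq.existVars.filter (fun u => decide (u ∉ z)) →
        f v = I.indMap 0) ∧
      qq.answerVars.map f = a.map I.indMap} =>
    (qq.atoms.map (rewAtomVal T I z f.1)).prod)

/- ## BALG¹_ε queries -/

def Term.fvars (t : Term) : Finset Var :=
  match t with
  | Term.var v => {v}
  | Term.ind _ => ∅

/-- Syntax of BALG¹_ε queries. -/
inductive BQuery where
  | atomC : AtomicConcept → Term → BQuery
  | atomR : AtomicRole → Term → Term → BQuery
  | conj : BQuery → BQuery → BQuery
  | eqSel : BQuery → Var → Term → BQuery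
  | proj : List Var → BQuery → BQuery
  | maxU : BQuery → BQuery → BQuery
  | arithU : BQuery → BQuery → BQuery
  | diff : BQuery → BQuery → BQuery

/-- Answer variables of a BALG¹_ε query. -/
def BQuery.fv : BQuery → Finset Var
  | BQuery.atomC _ t => t.fvars
  | BQuery.atomR _ t₁ t₂ => t₁.fvars ∪ t₂.fvars
  | BQuery.conj q₁ q₂ => q₁.fv ∪ q₂.fv
  | BQuery.eqSel q _ t => q.fv ∪ t.fvars
  | BQuery.proj ys q => q.fv \ ys.toFinset
  | BQuery.maxU q₁ _ => q₁.fv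
  | BQuery.arithU q₁ _ => q₁.fv
  | BQuery.diff q₁ _ => q₁.fv

/-- Well-formedness of BALG¹_ε queries. -/
def BQuery.WF : BQuery → Prop
  | BQuery.atomC _ _ => True
  | BQuery.atomR _ _ _ => True
  | BQuery.conj q₁ q₂ => q₁.WF ∧ q₂.WF
  | BQuery.eqSel q x _ => q.WF ∧ x ∈ q.fv
  | BQuery.proj _ q => q.WF
  | BQuery.maxU q₁ q₂ => q₁.WF ∧ q₂.WF ∧ q₁.fv = q₂.fv
  | BQuery.arithU q₁ q₂ => q₁.WF ∧ q₂.WF ∧ q₁.fv = q₂.fv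
  | BQuery.diff q₁ q₂ => q₁.WF ∧ q₂.WF ∧ q₁.fv = q₂.fv

/-- Semantics of BALG¹_ε queries under a valuation of the answer variables. -/
def BQuery.val (I : BagInterp) : BQuery → (Var → I.Δ) → ℕ∞
  | BQuery.atomC A t, f => I.cI A (termVal I f t)
  | BQuery.atomR P t₁ t₂, f => I.rI P (termVal I f t₁) (termVal I f t₂)
  | BQuery.conj q₁ q₂, f => q₁.val I f * q₂.val I f
  | BQuery.eqSel q x t, f => if f x = termVal I f t then q.val I f else 0
  | BQuery.proj ys q, f => bagSum (fun g : {g : Var → I.Δ // ∀ v, v ∉ ys → g v = f v} => q.val I g.1)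
  | BQuery.maxU q₁ q₂, f => max (q₁.val I f) (q₂.val I f)
  | BQuery.arithU q₁ q₂, f => q₁.val I f + q₂.val I f
  | BQuery.diff q₁ q₂, f => q₁.val I f - q₂.val I f

/-- Bag answers of a BALG¹_ε query with answer variables `xs` on a tuple `a`. -/
def BQuery.answer (Q : BQuery) (xs : List Var) (I : BagInterp) (a : List Ind) : ℕ∞ :=
  if a.length = xs.length then Q.val I (fun v => I.indMap (a.getD (xs.idxOf v) 0)) else 0

/- ## Enumerated bags, e-homomorphisms, and e-valuations -/

/-- Enumerated copies of a bag of domain elements (for an atomic concept). -/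
def EBagC (I : BagInterp) (A : AtomicConcept) : Type :=
  {p : I.Δ × ℕ // 1 ≤ p.2 ∧ (p.2 : ℕ∞) ≤ I.cI A p.1}

/-- Enumerated copies of a bag of pairs (for an atomic role). -/
def EBagR (I : BagInterp) (P : AtomicRole) : Type :=
  {p : (I.Δ × I.Δ) × ℕ // 1 ≤ p.2 ∧ (p.2 : ℕ∞) ≤ I.rI P p.1.1 p.1.2}

/-- An e-homomorphism between the enumerated versions of two bag interpretations. -/
structure EHom (I J : BagInterp) where
  h : I.Δ → J.Δ
  hInd : ∀ a : Ind, h (I.indMap a) = J.indMap a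
  hC : ∀ A : AtomicConcept, EBagC I A → EBagC J A
  hC_fst : ∀ (A : AtomicConcept) (x : EBagC I A), (hC A x).1.1 = h x.1.1
  hR : ∀ P : AtomicRole, EBagR I P → EBagR J P
  hR_fst : ∀ (P : AtomicRole) (x : EBagR I P), (hR P x).1.1 = (h x.1.1.1, h x.1.1.2)

/-- Predicate-injectivity on individuals of an e-homomorphism. -/
def EHom.PredInj {I J : BagInterp} (e : EHom I J) : Prop :=
  ∀ u : I.Δ, (∃ a : Ind, e.h u = J.indMap a) →
    (∀ A : AtomicConcept, ∀ x y : EBagC I A,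
      x.1.1 = u → y.1.1 = u → x.1.2 ≠ y.1.2 → e.hC A x ≠ e.hC A y) ∧
    (∀ P : AtomicRole, ∀ x y : EBagR I P, x.1.1.1 = u → y.1.1.1 = u →
      (x.1.1.2, x.1.2) ≠ (y.1.1.2, y.1.2) → e.hR P x ≠ e.hR P y) ∧
    (∀ P : AtomicRole, ∀ x y : EBagR I P, x.1.1.2 = u → y.1.1.2 = u →
      (x.1.1.1, x.1.2) ≠ (y.1.1.1, y.1.2) → e.hR P x ≠ e.hR P y)

/-- Enumerated atoms of a CQ (seen as a bag of atoms). -/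
def EAtom (q : CQ) : Type := {p : QAtom × ℕ // 1 ≤ p.2 ∧ p.2 ≤ q.atoms.count p.1}

/-- An e-valuation of the enumerated query `q^e` over the enumerated
interpretation `I^e`. -/
structure EVal (q : CQ) (I : BagInterp) where
  ν : Var → I.Δ
  hjunk : ∀ v, v ∉ q.vars → ν v = I.indMap 0
  heq : ∀ z t, QAtom.eqAt z t ∈ q.atoms → ν z = termVal I ν t
  ℓ : EAtom q → ℕ
  hone : ∀ e : EAtom q, 1 ≤ ℓ e
  hconcept : ∀ (e : EAtom q) (A : AtomicConcept) (t : Term),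
    e.1.1 = QAtom.conceptAt A t → (ℓ e : ℕ∞) ≤ I.cI A (termVal I ν t)
  hrole : ∀ (e : EAtom q) (P : AtomicRole) (t₁ t₂ : Term),
    e.1.1 = QAtom.roleAt P t₁ t₂ → (ℓ e : ℕ∞) ≤ I.rI P (termVal I ν t₁) (termVal I ν t₂)
  heqm : ∀ (e : EAtom q) (z : Var) (t : Term), e.1.1 = QAtom.eqAt z t → ℓ e = 1

/-- The tuple of domain elements to which an e-atom is sent by an e-valuation. -/
def EVal.imgTerms {q : CQ} {I : BagInterp} (ev : EVal q I) (e : EAtom q) : List I.Δ :=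
  (QAtom.terms e.1.1).map (termVal I ev.ν)

/-- The enumerated image of an e-atom under an e-valuation. -/
def EVal.img {q : CQ} {I : BagInterp} (ev : EVal q I) (e : EAtom q) : List I.Δ × ℕ :=
  (ev.imgTerms e, ev.ℓ e)

/- ## Auxiliary concrete queries -/

/-- The CQ `ζ_C(x)`: `A(x)`, `∃y.P(x,y)` or `∃y.P(y,x)`. -/
def zetaCQ : DLConcept → CQ
  | DLConcept.atomic A => ⟨[0], [], [QAtom.conceptAt A (Term.var 0)]⟩
  | DLConcept.ex (Role.atomic P) => ⟨[0], [1], [QAtom.roleAt P (Term.var 0) (Term.var 1)]⟩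
  | DLConcept.ex (Role.inv P) => ⟨[0], [1], [QAtom.roleAt P (Term.var 1) (Term.var 0)]⟩

/-- The CQ `q(x) = R(x,x)`. -/
def selfCQ (P : AtomicRole) : CQ := ⟨[0], [], [QAtom.roleAt P (Term.var 0) (Term.var 0)]⟩

/-- Vertex = atomic concept 0; Edge = atomic role 0, hasColour = atomic role 1,
Assign = atomic role 2, Reachable = atomic role 3.
TBox `{Vertex ⊑ ∃hasColour, hasColour ⊑ Assign}` (a DL-Lite_R TBox with a role
inclusion). -/
def tbox14 : TBox :=
  {TBoxAxiom.cIncl (DLConcept.atomic 0) (DLConcept.ex (Role.atomic 1)),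
   TBoxAxiom.rIncl (Role.atomic 1) (Role.atomic 2)}

/-- The rooted CQ `q(w) = ∃x,y,z,k,l. Edge(x,y) ∧ hasColour(x,z) ∧
hasColour(y,z) ∧ Assign(x,w) ∧ Assign(y,w) ∧ Reachable(x,k) ∧ Assign(k,l)`
(w = variable 0 is the answer variable; x,y,z,k,l = variables 1,…,5). -/
def q14 : CQ :=
  ⟨[0], [1, 2, 3, 4, 5],
    [QAtom.roleAt 0 (Term.var 1) (Term.var 2),
     QAtom.roleAt 1 (Term.var 1) (Term.var 3),
     QAtom.roleAt 1 (Term.var 2) (Term.var 3),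
     QAtom.roleAt 2 (Term.var 1) (Term.var 0),
     QAtom.roleAt 2 (Term.var 2) (Term.var 0),
     QAtom.roleAt 3 (Term.var 1) (Term.var 4),
     QAtom.roleAt 2 (Term.var 4) (Term.var 5)]⟩

/-- The bag ABox `A_G` for a graph `G = (V,E)` (vertices `u` encoded as
individuals `u+4`, the fresh vertex `a` as `0` and the fresh colours `r,g,b` as
`1,2,3`), all assertions with multiplicity 1: `Vertex(u)` for `u ∈ V`;
`Edge(u,v)` for `(u,v) ∈ E`; `Assign(u,r)`, `Assign(u,g)`, `Assign(u,b)` for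
`u ∈ V`; `Vertex(a)`, `Edge(a,a)`, `hasColour(a,r)`, `Assign(a,r)`;
`Reachable(a,a)`, `Reachable(a,u)`, `Reachable(u,a)` for `u ∈ V`; and
`Reachable(u,v)` for all distinct `u,v ∈ V`. -/
def abox14 (V : Finset ℕ) (E : Finset (ℕ × ℕ)) : BagABox :=
  V.val.map (fun u => Assertion.conceptA 0 (u + 4))
    + E.val.map (fun p => Assertion.roleA 0 (p.1 + 4) (p.2 + 4))
    + V.val.map (fun u => Assertion.roleA 2 (u + 4) 1)
    + V.val.map (fun u => Assertion.roleA 2 (u + 4) 2)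
    + V.val.map (fun u => Assertion.roleA 2 (u + 4) 3)
    + {Assertion.conceptA 0 0, Assertion.roleA 0 0 0, Assertion.roleA 1 0 1,
       Assertion.roleA 2 0 1, Assertion.roleA 3 0 0}
    + V.val.map (fun u => Assertion.roleA 3 0 (u + 4))
    + V.val.map (fun u => Assertion.roleA 3 (u + 4) 0)
    + ((V ×ˢ V).filter (fun p => p.1 ≠ p.2)).val.map
        (fun p => Assertion.roleA 3 (p.1 + 4) (p.2 + 4))

/-!
Every bag model of `⟨T, A_G⟩` contains the matches of `q(r)` with `x = y = a`, `z = r` and `(k, l)`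
ranging over the `3·|V| + 1` pairs of `Assign` in `A_G`. If `G` is not 3-colourable there is one
more: either some vertex `u` has a `hasColour`-successor `c` outside `{r, g, b}`, and
`(k, l) = (u, c)` is a new pair because `hasColour ⊑ Assign`; or every vertex has a colour among
`{r, g, b}`, these colours form a map `V → Fin 3`, and a monochromatic edge `(u, v)` gives a match
with `x = u ≠ a`. Conversely, a proper 3-colouring `γ` gives the model
`A_G ∪ {hasColour(u, γ u) | u ∈ V}`, in which all multiplicities are at most one and the loop at
`a` is the only edge with equally coloured ends, so exactly the `3·|V| + 1` matches above remain.
-/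

lemma le_bagSum {α : Type*} (f : α → ℕ∞) (a : α) : f a ≤ bagSum f :=
  le_trans (by simp) (le_iSup (fun s : Finset α => ∑ x ∈ s, f x) {a})

lemma card_le_bagSum {α : Type*} {f : α → ℕ∞} {s : Finset α} (hs : ∀ x ∈ s, f x ≠ 0) :
    (s.card : ℕ∞) ≤ bagSum f :=
  calc (s.card : ℕ∞) = ∑ _x ∈ s, 1 := by simp
    _ ≤ ∑ x ∈ s, f x := Finset.sum_le_sum fun x hx => Order.one_le_iff_ne_zero.2 (hs x hx)
    _ ≤ bagSum f := le_iSup (fun t : Finset α => ∑ x ∈ t, f x) s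

lemma bagSum_le_card {α β : Type*} {f : α → ℕ∞} (hf : ∀ x, f x ≤ 1) (e : α → β) (D : Finset β)
    (hmaps : ∀ x, f x ≠ 0 → e x ∈ D) (hinj : ∀ x y, f x ≠ 0 → f y ≠ 0 → e x = e y → x = y) :
    bagSum f ≤ D.card := by
  refine iSup_le fun s => ?_
  calc ∑ x ∈ s, f x = ∑ x ∈ s with f x ≠ 0, f x := (Finset.sum_filter_ne_zero s).symm
    _ ≤ ∑ x ∈ s with f x ≠ 0, 1 := Finset.sum_le_sum fun x _ => hf x
    _ = ((s.filter (f · ≠ 0)).card : ℕ∞) := by simp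
    _ ≤ D.card := by
      refine Nat.cast_le.2 (Finset.card_le_card_of_injOn e (fun x hx => ?_) fun x hx y hy => ?_)
      · exact hmaps x (Finset.mem_filter.1 hx).2
      · exact hinj x y (Finset.mem_filter.1 hx).2 (Finset.mem_filter.1 hy).2

lemma exists_ne_zero_of_bagSum_ne_zero {α : Type*} {f : α → ℕ∞} (h : bagSum f ≠ 0) :
    ∃ a, f a ≠ 0 := by
  contrapose! h
  simp [bagSum, h]

def CQ.IsValuation (q : CQ) (I : BagInterp) (a : List Ind) (f : Var → I.Δ) : Prop :=
  (∀ v, v ∉ q.vars → f v = I.indMap 0) ∧ q.answerVars.map f = a.map I.indMap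

lemma CQ.card_le_bagAnswer {q : CQ} {I : BagInterp} {a : List Ind} (S : Finset (Var → I.Δ))
    (hS : ∀ f ∈ S, q.IsValuation I a f ∧ (q.atoms.map (QAtom.mult I f)).prod ≠ 0) :
    (S.card : ℕ∞) ≤ q.bagAnswer I a := by
  have hcard : (S.subtype (q.IsValuation I a)).card = S.card := by
    rw [Finset.card_subtype, Finset.filter_true_of_mem fun f hf => (hS f hf).1]
  rw [← hcard]
  exact card_le_bagSum fun f hf => (hS f.1 (Finset.mem_subtype.1 hf)).2

lemma CQ.bagAnswer_le_card {q : CQ} {I : BagInterp} {a : List Ind} {β : Type*}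
    (hle : ∀ f, (q.atoms.map (QAtom.mult I f)).prod ≤ 1) (e : (Var → I.Δ) → β) (D : Finset β)
    (hmaps : ∀ f, q.IsValuation I a f → (q.atoms.map (QAtom.mult I f)).prod ≠ 0 → e f ∈ D)
    (hinj : ∀ f g, q.IsValuation I a f → q.IsValuation I a g →
      (q.atoms.map (QAtom.mult I f)).prod ≠ 0 → (q.atoms.map (QAtom.mult I g)).prod ≠ 0 →
      e f = e g → f = g) :
    q.bagAnswer I a ≤ D.card :=
  bagSum_le_card (f := fun f : {f // q.IsValuation I a f} => (q.atoms.map (QAtom.mult I f.1)).prod)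
    (fun f => hle f.1) (fun f => e f.1) D (fun f => hmaps f.1 f.2)
    fun f g hf hg hfg => Subtype.ext (hinj f.1 g.1 f.2 g.2 hf hg hfg)

lemma BagInterp.IsModel.assertMult_ne_zero {I : BagInterp} {K : Ontology} (hI : I.IsModel K)
    {s : Assertion} (hs : s ∈ K.abox) : I.assertMult s ≠ 0 := by
  have : (1 : ℕ∞) ≤ K.abox.mult s := by
    simpa [BagABox.mult] using Multiset.one_le_count_iff_mem.2 hs
  exact Order.one_le_iff_ne_zero.1 (this.trans (hI.2 s))

lemma BagInterp.IsModel.cI_ne_zero {I : BagInterp} {K : Ontology} (hI : I.IsModel K)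
    {A : AtomicConcept} {a : Ind} (h : .conceptA A a ∈ K.abox) : I.cI A (I.indMap a) ≠ 0 :=
  hI.assertMult_ne_zero h

lemma BagInterp.IsModel.rI_ne_zero {I : BagInterp} {K : Ontology} (hI : I.IsModel K)
    {P : AtomicRole} {a b : Ind} (h : .roleA P a b ∈ K.abox) :
    I.rI P (I.indMap a) (I.indMap b) ≠ 0 :=
  hI.assertMult_ne_zero h

lemma BagInterp.exists_rI_ne_zero_of_satisfiesAx {I : BagInterp} {A : AtomicConcept}
    {P : AtomicRole} (hax : I.SatisfiesAx (.cIncl (.atomic A) (.ex (.atomic P)))) {u : I.Δ}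
    (hu : I.cI A u ≠ 0) : ∃ v, I.rI P u v ≠ 0 :=
  exists_ne_zero_of_bagSum_ne_zero fun h => hu (le_antisymm (h ▸ hax u) zero_le)

lemma BagInterp.rI_ne_zero_of_satisfiesAx {I : BagInterp} {P Q : AtomicRole}
    (hax : I.SatisfiesAx (.rIncl (.atomic P) (.atomic Q))) {u v : I.Δ} (h : I.rI P u v ≠ 0) :
    I.rI Q u v ≠ 0 :=
  fun hQ => h (le_antisymm (hQ ▸ hax u v) zero_le)

lemma bagCertain_le_bagAnswer {K : Ontology} {q : CQ} {a : List Ind} {I : BagInterp}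
    (hI : I.IsModel K) : bagCertain K q a ≤ q.bagAnswer I a :=
  iInf₂_le I hI

lemma le_bagCertain {K : Ontology} {q : CQ} {a : List Ind} {c : ℕ∞}
    (h : ∀ I : BagInterp, I.IsModel K → c ≤ q.bagAnswer I a) : c ≤ bagCertain K q a :=
  le_iInf₂ h

def BagInterp.ofAssertions (S : Set Assertion) : BagInterp where
  Δ := Ind
  dne := ⟨0⟩
  indMap := id
  indInj := Function.injective_id
  cI A a := if .conceptA A a ∈ S then 1 else 0
  rI P a b := if .roleA P a b ∈ S then 1 else 0

namespace BagInterp.ofAssertions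

variable {S : Set Assertion}

@[simp]
lemma rI_ne_zero {P : AtomicRole} {a b : (ofAssertions S).Δ} :
    (ofAssertions S).rI P a b ≠ 0 ↔ .roleA P a b ∈ S := by
  simp [ofAssertions]

lemma rI_le_one (P : AtomicRole) (a b : (ofAssertions S).Δ) : (ofAssertions S).rI P a b ≤ 1 := by
  simp only [ofAssertions]; split_ifs <;> simp

lemma atoms_prod_le_one (q : CQ)
    (f : Var → (ofAssertions S).Δ) : (q.atoms.map (QAtom.mult (ofAssertions S) f)).prod ≤ 1 := by
  refine (List.prod_le_pow_card _ 1 fun x hx => ?_).trans_eq (one_pow _)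
  obtain ⟨atm, -, rfl⟩ := List.mem_map.1 hx
  cases atm with
  | conceptAt A t => simp only [QAtom.mult, ofAssertions]; split <;> simp
  | roleAt P t₁ t₂ => exact rI_le_one _ _ _
  | eqAt z t => simp only [QAtom.mult]; split <;> simp

lemma satisfiesAx_cIncl {A : AtomicConcept} {P : AtomicRole}
    (h : ∀ a, .conceptA A a ∈ S → ∃ b, .roleA P a b ∈ S) :
    (ofAssertions S).SatisfiesAx (.cIncl (.atomic A) (.ex (.atomic P))) := by
  intro a
  by_cases ha : .conceptA A a ∈ S
  · obtain ⟨b, hb⟩ := h a ha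
    refine le_trans ?_ (le_bagSum _ b)
    simp [conceptMult, roleMult, ofAssertions, ha, hb]
  · simp [conceptMult, ofAssertions, ha]

lemma satisfiesAx_rIncl {P Q : AtomicRole} (h : ∀ a b, .roleA P a b ∈ S → .roleA Q a b ∈ S) :
    (ofAssertions S).SatisfiesAx (.rIncl (.atomic P) (.atomic Q)) := by
  intro a b
  by_cases hab : .roleA P a b ∈ S
  · simp [roleMult, ofAssertions, hab, h a b hab]
  · simp [roleMult, ofAssertions, hab]

lemma mult_le_assertMult {A : BagABox} (hA : A.Nodup) (hAS : ∀ s ∈ A, s ∈ S) (s : Assertion) :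
    A.mult s ≤ (ofAssertions S).assertMult s := by
  by_cases hs : s ∈ A
  · have hmult : A.mult s = 1 := by simp [BagABox.mult, Multiset.count_eq_one_of_mem hA hs]
    cases s <;> simp [hmult, assertMult, ofAssertions, hAS _ hs]
  · simp [BagABox.mult, Multiset.count_eq_zero.2 hs]

end BagInterp.ofAssertions

lemma abox14_nodup (V : Finset ℕ) (E : Finset (ℕ × ℕ)) : (abox14 V E).Nodup := by
  simp (disch := first | exact Finset.nodup _ | exact (V.nodup.product V.nodup).filter _)
    [abox14, Multiset.nodup_add, Multiset.disjoint_map_map, Multiset.nodup_map_iff_inj_on]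
  grind

def assignPairs (V : Finset ℕ) : Finset (ℕ × ℕ) :=
  insert (0, 1) (V.image (· + 4) ×ˢ {1, 2, 3})

lemma card_assignPairs (V : Finset ℕ) : (assignPairs V).card = 3 * V.card + 1 := by
  rw [assignPairs, Finset.card_insert_of_notMem (by simp), Finset.card_product,
    Finset.card_image_of_injective _ (add_left_injective 4)]
  simp [mul_comm]

lemma roleA_two_mem_abox14_iff {V : Finset ℕ} {E : Finset (ℕ × ℕ)} {a b : ℕ} :
    .roleA 2 a b ∈ abox14 V E ↔ (a, b) ∈ assignPairs V := by
  simp [abox14, assignPairs]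
  grind

lemma q14_atoms_prod (I : BagInterp) (f : Var → I.Δ) :
    (q14.atoms.map (QAtom.mult I f)).prod =
      I.rI 0 (f 1) (f 2) * I.rI 1 (f 1) (f 3) * I.rI 1 (f 2) (f 3) * I.rI 2 (f 1) (f 0) *
        I.rI 2 (f 2) (f 0) * I.rI 3 (f 1) (f 4) * I.rI 2 (f 4) (f 5) := by
  simp only [q14, List.map_cons, List.map_nil, List.prod_cons, List.prod_nil, QAtom.mult, termVal]
  ring

def q14Val (I : BagInterp) (w x y z k l : I.Δ) : Var → I.Δ
  | 0 => w
  | 1 => x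
  | 2 => y
  | 3 => z
  | 4 => k
  | 5 => l
  | _ => I.indMap 0

lemma q14_vars : q14.vars = [0, 1, 2, 3, 4, 5] := rfl

lemma q14Val_isValuation (I : BagInterp) (x y z k l : I.Δ) :
    q14.IsValuation I [1] (q14Val I (I.indMap 1) x y z k l) := by
  refine ⟨fun v hv => ?_, rfl⟩
  match v with
  | 0 | 1 | 2 | 3 | 4 | 5 => simp [q14_vars] at hv
  | _ + 6 => rfl

lemma eq_q14Val_of_isValuation {I : BagInterp} {a : List Ind} {f : Var → I.Δ}
    (hf : q14.IsValuation I a f) : f = q14Val I (f 0) (f 1) (f 2) (f 3) (f 4) (f 5) := by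
  funext v
  match v with
  | 0 | 1 | 2 | 3 | 4 | 5 => rfl
  | v + 6 => exact hf.1 _ (by simp [q14_vars])

lemma roleA_three_zero_mem_abox14 {V : Finset ℕ} {E : Finset (ℕ × ℕ)} {p : ℕ × ℕ}
    (hp : p ∈ assignPairs V) : .roleA 3 0 p.1 ∈ abox14 V E := by
  simp [assignPairs] at hp
  simp [abox14]
  grind

lemma colour_eq_of_mem_assignPairs {V : Finset ℕ} {p : ℕ × ℕ} (hp : p ∈ assignPairs V) :
    p.2 = 1 ∨ p.2 = 2 ∨ p.2 = 3 := by
  simp [assignPairs] at hp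
  grind

def colouredFacts (V : Finset ℕ) (E : Finset (ℕ × ℕ)) (γ : ℕ → Fin 3) : Set Assertion :=
  {s | s ∈ abox14 V E ∨ ∃ u ∈ V, s = .roleA 1 (u + 4) ((γ u : ℕ) + 1)}

section ColourModel

variable {V : Finset ℕ} {E : Finset (ℕ × ℕ)} {γ : ℕ → Fin 3}

lemma roleA_one_mem_colouredFacts {a b : ℕ} :
    .roleA 1 a b ∈ colouredFacts V E γ ↔
      (a = 0 ∧ b = 1) ∨ ∃ u ∈ V, u + 4 = a ∧ (γ u : ℕ) + 1 = b := by
  simp [colouredFacts, abox14]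
  grind

lemma isModel_ofAssertions_colouredFacts :
    (BagInterp.ofAssertions (colouredFacts V E γ)).IsModel ⟨tbox14, abox14 V E⟩ := by
  refine ⟨fun ax hax => ?_, BagInterp.ofAssertions.mult_le_assertMult (abox14_nodup V E)
    fun s hs => Or.inl hs⟩
  simp only [tbox14, Finset.mem_insert, Finset.mem_singleton] at hax
  rcases hax with rfl | rfl
  · refine BagInterp.ofAssertions.satisfiesAx_cIncl fun a ha => ?_
    simp [colouredFacts, abox14] at ha
    rcases ha with rfl | ⟨u, hu, rfl⟩
    · exact ⟨1, roleA_one_mem_colouredFacts.2 (.inl ⟨rfl, rfl⟩)⟩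
    · exact ⟨_, roleA_one_mem_colouredFacts.2 (.inr ⟨u, hu, rfl, rfl⟩)⟩
  · refine BagInterp.ofAssertions.satisfiesAx_rIncl fun a b hab => ?_
    refine .inl (roleA_two_mem_abox14_iff.2 ?_)
    rcases roleA_one_mem_colouredFacts.1 hab with ⟨rfl, rfl⟩ | ⟨u, hu, rfl, rfl⟩
    · simp [assignPairs]
    · have := (γ u).isLt
      simp [assignPairs, hu]
      omega

lemma monochromatic_edge_eq_loop (hγ : ∀ p ∈ E, γ p.1 ≠ γ p.2) {x y z : ℕ}
    (hxy : .roleA 0 x y ∈ colouredFacts V E γ) (hxz : .roleA 1 x z ∈ colouredFacts V E γ)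
    (hyz : .roleA 1 y z ∈ colouredFacts V E γ) : x = 0 ∧ y = 0 ∧ z = 1 := by
  rw [roleA_one_mem_colouredFacts] at hxz hyz
  simp [colouredFacts, abox14] at hxy
  rcases hxy with ⟨rfl, rfl⟩ | ⟨a, b, hab, rfl, rfl⟩
  · rcases hxz with ⟨-, rfl⟩ | ⟨u, -, hu, -⟩
    · exact ⟨rfl, rfl, rfl⟩
    · omega
  · rcases hxz with ⟨ha, -⟩ | ⟨u, -, hu, rfl⟩
    · omega
    rcases hyz with ⟨hb, -⟩ | ⟨v, -, hv, hz⟩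
    · omega
    obtain ⟨rfl, rfl⟩ : u = a ∧ v = b := ⟨by omega, by omega⟩
    exact (hγ _ hab (Fin.ext (by dsimp only; omega))).elim

lemma q14_bagAnswer_ofAssertions_colouredFacts_le (hγ : ∀ p ∈ E, γ p.1 ≠ γ p.2) :
    q14.bagAnswer (.ofAssertions (colouredFacts V E γ)) [1] ≤ ((3 * V.card + 1 : ℕ) : ℕ∞) := by
  have hcontrib : ∀ f, q14.IsValuation (.ofAssertions (colouredFacts V E γ)) [1] f →
      (q14.atoms.map (QAtom.mult (.ofAssertions (colouredFacts V E γ)) f)).prod ≠ 0 →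
      f = q14Val _ (1 : ℕ) (0 : ℕ) (0 : ℕ) (1 : ℕ) (f 4) (f 5) ∧ (f 4, f 5) ∈ assignPairs V := by
    intro f hf hne
    simp only [q14_atoms_prod, mul_ne_zero_iff, BagInterp.ofAssertions.rI_ne_zero] at hne
    obtain ⟨⟨⟨⟨⟨⟨hxy, hxz⟩, hyz⟩, -⟩, -⟩, -⟩, hkl⟩ := hne
    obtain ⟨hx, hy, hz⟩ := monochromatic_edge_eq_loop hγ hxy hxz hyz
    have hw : f 0 = (1 : ℕ) := (List.cons_eq_cons.1 hf.2).1
    refine ⟨(eq_q14Val_of_isValuation hf).trans (by rw [hw, hx, hy, hz]), ?_⟩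
    rcases hkl with hkl | ⟨u, -, hu⟩
    · exact roleA_two_mem_abox14_iff.1 hkl
    · exact absurd (Assertion.roleA.inj hu).1 (by decide)
  rw [← card_assignPairs]
  refine q14.bagAnswer_le_card (BagInterp.ofAssertions.atoms_prod_le_one q14) (fun f => (f 4, f 5))
    _ (fun f hf hne => (hcontrib f hf hne).2) fun f g hf hg hfne hgne hfg => ?_
  obtain ⟨h4, h5⟩ := Prod.mk.inj hfg
  rw [(hcontrib f hf hfne).1, (hcontrib g hg hgne).1, h4, h5]

end ColourModel

section LowerBound

variable {V : Finset ℕ} {E : Finset (ℕ × ℕ)} {I : BagInterp}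

def baseValuation (I : BagInterp) (p : ℕ × ℕ) : Var → I.Δ :=
  q14Val I (I.indMap 1) (I.indMap 0) (I.indMap 0) (I.indMap 1) (I.indMap p.1) (I.indMap p.2)

lemma q14_prod_ne_zero_at_loop (hI : I.IsModel ⟨tbox14, abox14 V E⟩) {k l : I.Δ}
    (hk : I.rI 3 (I.indMap 0) k ≠ 0) (hkl : I.rI 2 k l ≠ 0) :
    (q14.atoms.map (QAtom.mult I
      (q14Val I (I.indMap 1) (I.indMap 0) (I.indMap 0) (I.indMap 1) k l))).prod ≠ 0 := by
  have hedge : I.rI 0 (I.indMap 0) (I.indMap 0) ≠ 0 := hI.rI_ne_zero (by simp [abox14])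
  have hcol : I.rI 1 (I.indMap 0) (I.indMap 1) ≠ 0 := hI.rI_ne_zero (by simp [abox14])
  have hasg : I.rI 2 (I.indMap 0) (I.indMap 1) ≠ 0 := hI.rI_ne_zero (by simp [abox14])
  simp only [q14_atoms_prod, q14Val, mul_ne_zero_iff]
  exact ⟨⟨⟨⟨⟨⟨hedge, hcol⟩, hcol⟩, hasg⟩, hasg⟩, hk⟩, hkl⟩

lemma q14_prod_ne_zero_of_monochromatic (hI : I.IsModel ⟨tbox14, abox14 V E⟩) {x y : ℕ}
    (hx : x ∈ V) (hy : y ∈ V) (hxy : (x, y) ∈ E) {c : I.Δ}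
    (hxc : I.rI 1 (I.indMap (x + 4)) c ≠ 0) (hyc : I.rI 1 (I.indMap (y + 4)) c ≠ 0) :
    (q14.atoms.map (QAtom.mult I
      (q14Val I (I.indMap 1) (I.indMap (x + 4)) (I.indMap (y + 4)) c (I.indMap 0)
        (I.indMap 1)))).prod ≠ 0 := by
  have hedge : I.rI 0 (I.indMap (x + 4)) (I.indMap (y + 4)) ≠ 0 :=
    hI.rI_ne_zero (by simp [abox14, hxy])
  have hasgx : I.rI 2 (I.indMap (x + 4)) (I.indMap 1) ≠ 0 := hI.rI_ne_zero (by simp [abox14, hx])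
  have hasgy : I.rI 2 (I.indMap (y + 4)) (I.indMap 1) ≠ 0 := hI.rI_ne_zero (by simp [abox14, hy])
  have hreach : I.rI 3 (I.indMap (x + 4)) (I.indMap 0) ≠ 0 := hI.rI_ne_zero (by simp [abox14, hx])
  have hasg : I.rI 2 (I.indMap 0) (I.indMap 1) ≠ 0 := hI.rI_ne_zero (by simp [abox14])
  simp only [q14_atoms_prod, q14Val, mul_ne_zero_iff]
  exact ⟨⟨⟨⟨⟨⟨hedge, hxc⟩, hyc⟩, hasgx⟩, hasgy⟩, hreach⟩, hasg⟩

lemma exists_valuation_not_mem_base (hVE : ∀ p ∈ E, p.1 ∈ V ∧ p.2 ∈ V)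
    (hnc : ¬ ∃ γ : ℕ → Fin 3, ∀ p ∈ E, γ p.1 ≠ γ p.2) (hI : I.IsModel ⟨tbox14, abox14 V E⟩) :
    ∃ f, q14.IsValuation I [1] f ∧ (q14.atoms.map (QAtom.mult I f)).prod ≠ 0 ∧
      f ∉ (assignPairs V).image (baseValuation I) := by
  by_cases hpal : ∀ u ∈ V, ∀ c, I.rI 1 (I.indMap (u + 4)) c ≠ 0 →
      c = I.indMap 1 ∨ c = I.indMap 2 ∨ c = I.indMap 3
  · have hcolour : ∀ u ∈ V, ∃ j : Fin 3, I.rI 1 (I.indMap (u + 4)) (I.indMap (j + 1)) ≠ 0 := by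
      intro u hu
      obtain ⟨c, hc⟩ := I.exists_rI_ne_zero_of_satisfiesAx
        (hI.1 (.cIncl (.atomic 0) (.ex (.atomic 1))) (by simp [tbox14]))
        (hI.cI_ne_zero (a := u + 4) (by simp [abox14, hu]))
      rcases hpal u hu c hc with rfl | rfl | rfl
      exacts [⟨0, hc⟩, ⟨1, hc⟩, ⟨2, hc⟩]
    choose! γ hγ using hcolour
    obtain ⟨⟨x, y⟩, hxy, hmono⟩ : ∃ p ∈ E, γ p.1 = γ p.2 := by
      by_contra! h
      exact hnc ⟨γ, h⟩
    obtain ⟨hx, hy⟩ := hVE _ hxy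
    refine ⟨_, q14Val_isValuation .., q14_prod_ne_zero_of_monochromatic hI hx hy hxy (hγ x hx)
      (hmono ▸ hγ y hy), fun h => ?_⟩
    obtain ⟨p, -, hp⟩ := Finset.mem_image.1 h
    have : 0 = x + 4 := I.indInj (congrFun hp 1)
    omega
  · push Not at hpal
    obtain ⟨u, hu, c, hc, hc1, hc2, hc3⟩ := hpal
    have hasg : I.rI 2 (I.indMap (u + 4)) c ≠ 0 := I.rI_ne_zero_of_satisfiesAx
      (hI.1 (.rIncl (.atomic 1) (.atomic 2)) (by simp [tbox14])) hc
    refine ⟨_, q14Val_isValuation .., q14_prod_ne_zero_at_loop hI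
      (hI.rI_ne_zero (by simp [abox14, hu])) hasg, fun h => ?_⟩
    obtain ⟨p, hp, hpc⟩ := Finset.mem_image.1 h
    have hc' : I.indMap p.2 = c := congrFun hpc 5
    rcases colour_eq_of_mem_assignPairs hp with h | h | h <;> rw [h] at hc'
    exacts [hc1 hc'.symm, hc2 hc'.symm, hc3 hc'.symm]

lemma q14_bagAnswer_ge_of_not_colourable (hVE : ∀ p ∈ E, p.1 ∈ V ∧ p.2 ∈ V)
    (hnc : ¬ ∃ γ : ℕ → Fin 3, ∀ p ∈ E, γ p.1 ≠ γ p.2) (hI : I.IsModel ⟨tbox14, abox14 V E⟩) :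
    ((3 * V.card + 2 : ℕ) : ℕ∞) ≤ q14.bagAnswer I [1] := by
  obtain ⟨f, hf, hfne, hfbase⟩ := exists_valuation_not_mem_base hVE hnc hI
  have hinj : Function.Injective (baseValuation I) := fun p q h =>
    Prod.ext (I.indInj (congrFun h 4)) (I.indInj (congrFun h 5))
  have hcard : (insert f ((assignPairs V).image (baseValuation I))).card = 3 * V.card + 2 := by
    rw [Finset.card_insert_of_notMem hfbase, Finset.card_image_of_injective _ hinj,
      card_assignPairs]
  rw [← hcard]
  refine q14.card_le_bagAnswer _ fun g hg => ?_
  rcases Finset.mem_insert.1 hg with rfl | hg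
  · exact ⟨hf, hfne⟩
  · obtain ⟨p, hp, rfl⟩ := Finset.mem_image.1 hg
    exact ⟨q14Val_isValuation .., q14_prod_ne_zero_at_loop hI
      (hI.rI_ne_zero (roleA_three_zero_mem_abox14 hp))
      (hI.rI_ne_zero (roleA_two_mem_abox14_iff.2 hp))⟩

end LowerBound

theorem statement_14_general (V : Finset ℕ) (E : Finset (ℕ × ℕ))
    (hVE : ∀ p ∈ E, p.1 ∈ V ∧ p.2 ∈ V) :
    (¬ ∃ γ : ℕ → Fin 3, ∀ p ∈ E, γ p.1 ≠ γ p.2) ↔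
      ((3 * V.card + 2 : ℕ) : ℕ∞) ≤ bagCertain ⟨tbox14, abox14 V E⟩ q14 [1] := by
  refine ⟨fun hnc => le_bagCertain fun I hI => q14_bagAnswer_ge_of_not_colourable hVE hnc hI, ?_⟩
  rintro hle ⟨γ, hγ⟩
  have hupper : bagCertain ⟨tbox14, abox14 V E⟩ q14 [1] ≤ ((3 * V.card + 1 : ℕ) : ℕ∞) :=
    (bagCertain_le_bagAnswer isModel_ofAssertions_colouredFacts).trans
      (q14_bagAnswer_ofAssertions_colouredFacts_le hγ)
  have := Nat.cast_le.1 (hle.trans hupper)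
  omega

/-- For every finite undirected connected graph `G = (V,E)`
without self-loops: `G` is not 3-colourable iff the bag certain answer
`q^{⟨T,A_G⟩}(r)` is at least `3·|V| + 2`. -/
theorem statement_14 (V : Finset ℕ) (E : Finset (ℕ × ℕ))
    (hVE : ∀ p ∈ E, p.1 ∈ V ∧ p.2 ∈ V)
    (hsym : ∀ p : ℕ × ℕ, p ∈ E ↔ (p.2, p.1) ∈ E)
    (hirr : ∀ v : ℕ, (v, v) ∉ E)
    (hconn : ∀ u ∈ V, ∀ v ∈ V, Relation.ReflTransGen (fun x y => (x, y) ∈ E) u v) :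
    (¬ ∃ γ : ℕ → Fin 3, ∀ p ∈ E, γ p.1 ≠ γ p.2) ↔
      ((3 * V.card + 2 : ℕ) : ℕ∞) ≤ bagCertain ⟨tbox14, abox14 V E⟩ q14 [1] :=
  statement_14_general V E hVE
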